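/- arXiv:1703.03208 — 3 statements merged into one kernel-verified Lean document; each statement's English description precedes it below -/
import Mathlib

section
/- Suppose A ∈ ℝ^{m×n} satisfies the S-REC(S, γ, δ) and additionally ‖A(x̄ − x*)‖ ≤ 2‖x̄ − x*‖ where x̄ = argmin_{x ∈ S} ‖x* − x‖. Let y = Ax* + η, and let x̂ ∈ S satisfy ‖y − Ax̂‖ ≤ min_{x ∈ S} ‖y − Ax‖ + ε. Then ‖x̂ − x*‖ ≤ (4/γ + 1)·min_{x ∈ S} ‖x* − x‖ + (1/γ)(2‖η‖ + ε + δ). -/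
/-- If `A` satisfies S-REC(S, γ, δ) and `‖A(x̄ − x*)‖ ≤ 2‖x̄ − x*‖` for
`x̄ = argmin_{x ∈ S} ‖x* − x‖`, `y = Ax* + η`, and `x̂ ∈ S` approximately minimizes
`‖y − Ax‖` over `S` to within `ε`, then
`‖x̂ − x*‖ ≤ (4/γ + 1)·min_{x ∈ S} ‖x* − x‖ + (1/γ)(2‖η‖ + ε + δ)`. -/
theorem srec_recovery {n m : ℕ} (S : Set (EuclideanSpace ℝ (Fin n)))
    (A : EuclideanSpace ℝ (Fin n) →ₗ[ℝ] EuclideanSpace ℝ (Fin m))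
    (xstar : EuclideanSpace ℝ (Fin n)) (η : EuclideanSpace ℝ (Fin m))
    (γ δ ε : ℝ) (hγ : 0 < γ) (hδ : 0 ≤ δ) (hε : 0 ≤ ε)
    (hSREC : ∀ x₁ ∈ S, ∀ x₂ ∈ S, γ * ‖x₁ - x₂‖ - δ ≤ ‖A (x₁ - x₂)‖)
    (xbar : EuclideanSpace ℝ (Fin n)) (hxbar : xbar ∈ S)
    (hxbar_min : ∀ x ∈ S, ‖xstar - xbar‖ ≤ ‖xstar - x‖)
    (hA : ‖A (xbar - xstar)‖ ≤ 2 * ‖xbar - xstar‖)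
    (y : EuclideanSpace ℝ (Fin m)) (hy : y = A xstar + η)
    (xhat : EuclideanSpace ℝ (Fin n)) (hxhat : xhat ∈ S)
    (hxhat_min : ∀ x ∈ S, ‖y - A xhat‖ ≤ ‖y - A x‖ + ε) :
    ‖xhat - xstar‖ ≤ (4 / γ + 1) * ‖xstar - xbar‖ + (1 / γ) * (2 * ‖η‖ + ε + δ) := by
  have h1 : ‖y - A xbar‖ ≤ 2 * ‖xbar - xstar‖ + ‖η‖ := by
    have : y - A xbar = -(A (xbar - xstar)) + η := by
      rw [hy, map_sub]; abel
    rw [this]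
    calc ‖-(A (xbar - xstar)) + η‖ ≤ ‖-(A (xbar - xstar))‖ + ‖η‖ := norm_add_le _ _
      _ = ‖A (xbar - xstar)‖ + ‖η‖ := by rw [norm_neg]
      _ ≤ 2 * ‖xbar - xstar‖ + ‖η‖ := by linarith
  have h2 : ‖A (xhat - xbar)‖ ≤ 2 * ‖y - A xbar‖ + ε := by
    have : A (xhat - xbar) = -(y - A xhat) + (y - A xbar) := by
      rw [map_sub]; abel
    rw [this]
    calc ‖-(y - A xhat) + (y - A xbar)‖ ≤ ‖-(y - A xhat)‖ + ‖y - A xbar‖ := norm_add_le _ _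
      _ = ‖y - A xhat‖ + ‖y - A xbar‖ := by rw [norm_neg]
      _ ≤ 2 * ‖y - A xbar‖ + ε := by have := hxhat_min xbar hxbar; linarith
  have h3 : γ * ‖xhat - xbar‖ - δ ≤ ‖A (xhat - xbar)‖ := hSREC _ hxhat _ hxbar
  have h4 : γ * ‖xhat - xbar‖ ≤ 4 * ‖xbar - xstar‖ + 2 * ‖η‖ + ε + δ := by linarith
  have h5 : ‖xhat - xstar‖ ≤ ‖xhat - xbar‖ + ‖xbar - xstar‖ := norm_sub_le_norm_sub_add_norm_sub _ _ _
  have h6 : ‖xhat - xbar‖ ≤ (4 * ‖xbar - xstar‖ + 2 * ‖η‖ + ε + δ) / γ := by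
    rw [le_div_iff₀ hγ]; linarith [mul_comm γ ‖xhat - xbar‖]
  have h7 : ‖xbar - xstar‖ = ‖xstar - xbar‖ := norm_sub_rev _ _
  rw [h7] at h6
  calc ‖xhat - xstar‖ ≤ (4 * ‖xstar - xbar‖ + 2 * ‖η‖ + ε + δ) / γ + ‖xstar - xbar‖ := by
        rw [h7] at h5; linarith
    _ = (4 / γ + 1) * ‖xstar - xbar‖ + (1 / γ) * (2 * ‖η‖ + ε + δ) := by
        field_simp; ring
end

section
/- Suppose A ∈ ℝ^{m×n} satisfies: (i) for all z₁, z₂ in a (δ/L)-net N of Bᵏ(r), ‖A(G(z₁) − G(z₂))‖ ≥ (1−α)‖G(z₁) − G(z₂)‖, and (ii) for all x ∈ G(Bᵏ(r)) with nearest net point x' ∈ G(N), ‖A(x − x')‖ ≤ Cδ for some constant C. Then for all z, z' ∈ Bᵏ(r): (1−α)‖G(z) − G(z')‖ ≤ ‖A(G(z) − G(z'))‖ + (2(1−α) + 2C)δ; i.e., A satisfies S-REC(G(Bᵏ(r)), 1−α, O(δ)). -/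
/-- If (i) `A` does not shrink differences of net points by more than a
factor `1−α`, and (ii) `‖A(x − x')‖ ≤ Cδ` whenever `x'` is a nearest net point of
`x ∈ G(Bᵏ(r))`, then for all `z, z' ∈ Bᵏ(r)`,
`(1−α)‖G(z) − G(z')‖ ≤ ‖A(G(z) − G(z'))‖ + (2(1−α) + 2C)δ`;
i.e. `A` satisfies S-REC(G(Bᵏ(r)), 1−α, O(δ)). -/
theorem srec_from_net {k n m : ℕ}
    (G : EuclideanSpace ℝ (Fin k) → EuclideanSpace ℝ (Fin n))
    (A : EuclideanSpace ℝ (Fin n) →ₗ[ℝ] EuclideanSpace ℝ (Fin m))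
    (L δ r α C : ℝ) (hL : 0 < L) (hδ : 0 < δ) (hα : 0 < α) (hα1 : α < 1) (hC : 0 < C)
    (hLip : ∀ z₁ z₂, ‖G z₁ - G z₂‖ ≤ L * ‖z₁ - z₂‖)
    (N : Finset (EuclideanSpace ℝ (Fin k))) (hNne : N.Nonempty)
    (hN : (N : Set (EuclideanSpace ℝ (Fin k))) ⊆ Metric.closedBall 0 r)
    (hnet : ∀ z ∈ Metric.closedBall (0 : EuclideanSpace ℝ (Fin k)) r,
      ∃ z' ∈ N, ‖z - z'‖ ≤ δ / L)
    (hi : ∀ z₁ ∈ N, ∀ z₂ ∈ N,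
      (1 - α) * ‖G z₁ - G z₂‖ ≤ ‖A (G z₁ - G z₂)‖)
    (hii : ∀ x ∈ G '' Metric.closedBall (0 : EuclideanSpace ℝ (Fin k)) r,
      ∀ x' ∈ G '' (N : Set (EuclideanSpace ℝ (Fin k))),
        (∀ x'' ∈ G '' (N : Set (EuclideanSpace ℝ (Fin k))), ‖x - x'‖ ≤ ‖x - x''‖) →
        ‖A (x - x')‖ ≤ C * δ) :
    ∀ z ∈ Metric.closedBall (0 : EuclideanSpace ℝ (Fin k)) r,
      ∀ z' ∈ Metric.closedBall (0 : EuclideanSpace ℝ (Fin k)) r,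
        (1 - α) * ‖G z - G z'‖ ≤ ‖A (G z - G z')‖ + (2 * (1 - α) + 2 * C) * δ := by
  intro z hz z' hz'
  -- nearest net point for a given z
  have key : ∀ z ∈ Metric.closedBall (0 : EuclideanSpace ℝ (Fin k)) r,
      ∃ w ∈ N, ‖G z - G w‖ ≤ δ ∧ ‖A (G z - G w)‖ ≤ C * δ := by
    intro z hz
    obtain ⟨w, hwN, hmin⟩ := N.exists_min_image (fun w => ‖G z - G w‖) hNne
    obtain ⟨w', hw'N, hw'⟩ := hnet z hz
    refine ⟨w, hwN, ?_, ?_⟩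
    · calc ‖G z - G w‖ ≤ ‖G z - G w'‖ := hmin w' hw'N
        _ ≤ L * ‖z - w'‖ := hLip z w'
        _ ≤ L * (δ / L) := by
            apply mul_le_mul_of_nonneg_left hw' hL.le
        _ = δ := by field_simp
    · apply hii (G z) ⟨z, hz, rfl⟩ (G w) ⟨w, hwN, rfl⟩
      rintro x'' ⟨w'', hw''N, rfl⟩
      exact hmin w'' hw''N
  obtain ⟨w₁, hw₁N, hd₁, hA₁⟩ := key z hz
  obtain ⟨w₂, hw₂N, hd₂, hA₂⟩ := key z' hz'
  have hα' : (0:ℝ) ≤ 1 - α := by linarith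
  have h1 : ‖G z - G z'‖ ≤ ‖G w₁ - G w₂‖ + ‖G z - G w₁‖ + ‖G z' - G w₂‖ := by
    have := norm_sub_le_norm_sub_add_norm_sub (G z) (G w₁) (G z')
    have := norm_sub_le_norm_sub_add_norm_sub (G w₁) (G w₂) (G z')
    have h3 : ‖G w₂ - G z'‖ = ‖G z' - G w₂‖ := norm_sub_rev _ _
    linarith
  have h2 : ‖A (G w₁ - G w₂)‖ ≤ ‖A (G z - G z')‖ + ‖A (G z - G w₁)‖ + ‖A (G z' - G w₂)‖ := by
    have e : G w₁ - G w₂ = (G z - G z') - (G z - G w₁) + (G z' - G w₂) := by abel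
    rw [e, map_add, map_sub]
    calc ‖A (G z - G z') - A (G z - G w₁) + A (G z' - G w₂)‖
        ≤ ‖A (G z - G z') - A (G z - G w₁)‖ + ‖A (G z' - G w₂)‖ := norm_add_le _ _
      _ ≤ ‖A (G z - G z')‖ + ‖A (G z - G w₁)‖ + ‖A (G z' - G w₂)‖ := by
          have := norm_sub_le (A (G z - G z')) (A (G z - G w₁)); linarith
  have h4 := hi w₁ hw₁N w₂ hw₂N
  calc (1 - α) * ‖G z - G z'‖
      ≤ (1 - α) * (‖G w₁ - G w₂‖ + ‖G z - G w₁‖ + ‖G z' - G w₂‖) :=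
        mul_le_mul_of_nonneg_left h1 hα'
    _ = (1 - α) * ‖G w₁ - G w₂‖ + (1 - α) * ‖G z - G w₁‖ + (1 - α) * ‖G z' - G w₂‖ := by ring
    _ ≤ ‖A (G w₁ - G w₂)‖ + (1 - α) * δ + (1 - α) * δ := by
        have := mul_le_mul_of_nonneg_left hd₁ hα'
        have := mul_le_mul_of_nonneg_left hd₂ hα'
        linarith
    _ ≤ ‖A (G z - G z')‖ + (2 * (1 - α) + 2 * C) * δ := by linarith
end

section
/- Let S ⊆ ℝⁿ and suppose S' is a δ-net of S (i.e., every point of S is within distance δ of S'). If A satisfies ‖A(x₁−x₂)‖ ≥ γ‖x₁−x₂‖ for all x₁, x₂ ∈ S', and ‖A(x − x')‖ ≤ Cδ whenever x ∈ S and x' is its nearest point in S', then A satisfies S-REC(S, γ, (2γ + 2C)δ). -/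
/-- If `S'` is a `δ`-net of `S`, `A` satisfies
`‖A(x₁−x₂)‖ ≥ γ‖x₁−x₂‖` on `S'`, and `‖A(x − x')‖ ≤ Cδ` whenever `x'` is a nearest point
of `S'` to `x ∈ S`, then `A` satisfies S-REC(S, γ, (2γ + 2C)δ). -/
theorem srec_transfer_from_net {n m : ℕ}
    (A : EuclideanSpace ℝ (Fin n) →ₗ[ℝ] EuclideanSpace ℝ (Fin m))
    (S S' : Set (EuclideanSpace ℝ (Fin n))) (γ C δ : ℝ)
    (hγ0 : 0 < γ) (hγ1 : γ ≤ 1) (hC : 0 < C) (hδ : 0 < δ)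
    (hnet : ∀ x ∈ S, ∃ x' ∈ S', ‖x - x'‖ ≤ δ)
    (hnearest : ∀ x ∈ S, ∃ x' ∈ S', ∀ x'' ∈ S', ‖x - x'‖ ≤ ‖x - x''‖)
    (hS' : ∀ x₁ ∈ S', ∀ x₂ ∈ S', γ * ‖x₁ - x₂‖ ≤ ‖A (x₁ - x₂)‖)
    (hclose : ∀ x ∈ S, ∀ x' ∈ S',
      (∀ x'' ∈ S', ‖x - x'‖ ≤ ‖x - x''‖) → ‖A (x - x')‖ ≤ C * δ) :
    ∀ x₁ ∈ S, ∀ x₂ ∈ S, γ * ‖x₁ - x₂‖ - (2 * γ + 2 * C) * δ ≤ ‖A (x₁ - x₂)‖ := by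
  intro x₁ hx₁ x₂ hx₂
  obtain ⟨y₁, hy₁, hn₁⟩ := hnearest x₁ hx₁
  obtain ⟨y₂, hy₂, hn₂⟩ := hnearest x₂ hx₂
  obtain ⟨z₁, hz₁, hd₁⟩ := hnet x₁ hx₁
  obtain ⟨z₂, hz₂, hd₂⟩ := hnet x₂ hx₂
  have hd₁' : ‖x₁ - y₁‖ ≤ δ := (hn₁ z₁ hz₁).trans hd₁
  have hd₂' : ‖x₂ - y₂‖ ≤ δ := (hn₂ z₂ hz₂).trans hd₂
  have hA₁ : ‖A (x₁ - y₁)‖ ≤ C * δ := hclose x₁ hx₁ y₁ hy₁ hn₁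
  have hA₂ : ‖A (x₂ - y₂)‖ ≤ C * δ := hclose x₂ hx₂ y₂ hy₂ hn₂
  have hnorm : ‖x₁ - x₂‖ ≤ ‖y₁ - y₂‖ + 2 * δ := by
    calc ‖x₁ - x₂‖ = ‖(x₁ - y₁) + (y₁ - y₂) + (y₂ - x₂)‖ := by rw [show x₁ - x₂ = (x₁ - y₁) + (y₁ - y₂) + (y₂ - x₂) by abel]
      _ ≤ ‖(x₁ - y₁) + (y₁ - y₂)‖ + ‖y₂ - x₂‖ := norm_add_le _ _
      _ ≤ ‖x₁ - y₁‖ + ‖y₁ - y₂‖ + ‖y₂ - x₂‖ := by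
          gcongr; exact norm_add_le _ _
      _ ≤ δ + ‖y₁ - y₂‖ + δ := by
          gcongr
          rw [norm_sub_rev]; exact hd₂'
      _ = ‖y₁ - y₂‖ + 2 * δ := by ring
  have hAnorm : ‖A (y₁ - y₂)‖ ≤ ‖A (x₁ - x₂)‖ + 2 * (C * δ) := by
    calc ‖A (y₁ - y₂)‖ = ‖A (x₁ - x₂) - A (x₁ - y₁) + A (x₂ - y₂)‖ := by
          rw [← map_sub, ← map_add]; congr 1; abel
      _ ≤ ‖A (x₁ - x₂) - A (x₁ - y₁)‖ + ‖A (x₂ - y₂)‖ := norm_add_le _ _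
      _ ≤ ‖A (x₁ - x₂)‖ + ‖A (x₁ - y₁)‖ + ‖A (x₂ - y₂)‖ := by
          gcongr; exact norm_sub_le _ _
      _ ≤ ‖A (x₁ - x₂)‖ + C * δ + C * δ := by gcongr
      _ = ‖A (x₁ - x₂)‖ + 2 * (C * δ) := by ring
  have hkey := hS' y₁ hy₁ y₂ hy₂
  nlinarith [mul_le_mul_of_nonneg_left hnorm hγ0.le]
end
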